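/- Let Ω ⊂ ℝ^{1+n} be a bounded open set, let u : ℝ^{1+n} → ℝ be harmonic on ℝ^{1+n}, and let v = (v₀,…,v_n) be a C¹ compactly supported vector field with support contained in Ω. Then Σ_{j,k} ∫_Ω (∂ⱼv_k + ∂_k vⱼ − δ_{jk} div v)(x) ∂ⱼu(x) ∂_k u(x) dx = 0. -/

import Mathlib

/-!
Rellich's identity: for harmonic `u` the integrand is, pointwise, the divergence of the field
`F = 2 (v · ∇u) ∇u - |∇u|² v`. The terms of `div F` carrying second derivatives of `u` cancel by
the symmetry of the Hessian and `Δu = 0`, and `F` inherits the compact support of `v`, so its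
divergence integrates to zero.
-/

open MeasureTheory

/-- Partial derivative in the `j`-th coordinate direction. -/
noncomputable def pd {m : ℕ} {E : Type*} [NormedAddCommGroup E] [NormedSpace ℝ E]
    (j : Fin m) (f : (Fin m → ℝ) → E) (x : Fin m → ℝ) : E :=
  fderiv ℝ f x (Pi.single j 1)

open Finset

section FDerivIntegral

variable {E F : Type*} [NormedAddCommGroup E] [NormedSpace ℝ E] [MeasurableSpace E]
  [BorelSpace E] {μ : Measure E} [NormedAddCommGroup F] [NormedSpace ℝ F] {f : E → F}

theorem ContDiff.integrable_fderiv_apply [IsFiniteMeasureOnCompacts μ] (hf : ContDiff ℝ 1 f)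
    (hs : HasCompactSupport f) (w : E) : Integrable (fun x => fderiv ℝ f x w) μ :=
  ((hf.continuous_fderiv one_ne_zero).clm_apply continuous_const).integrable_of_hasCompactSupport
    (hs.fderiv_apply (𝕜 := ℝ) w)

theorem integral_fderiv_apply_eq_zero [FiniteDimensional ℝ E] [μ.IsAddHaarMeasure]
    (hf : ContDiff ℝ 1 f) (hs : HasCompactSupport f) (w : E) : ∫ x, fderiv ℝ f x w ∂μ = 0 := by
  simpa using integral_smul_fderiv_eq_neg_fderiv_smul_of_integrable (μ := μ)
    (f := fun _ => (1 : ℝ)) (g := f) (v := w) (by simp)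
    (by simpa using hf.integrable_fderiv_apply hs w)
    (by simpa using hf.continuous.integrable_of_hasCompactSupport hs)
    (fun x _ => differentiableAt_const _) (fun x _ => hf.differentiable one_ne_zero x)

end FDerivIntegral

section PartialDerivative

variable {m : ℕ} {E : Type*} [NormedAddCommGroup E] [NormedSpace ℝ E] {f g : (Fin m → ℝ) → ℝ}
  {φ : (Fin m → ℝ) → E} {x : Fin m → ℝ} {j : Fin m}

theorem pd_const (c : ℝ) : pd j (fun _ => c) x = 0 := by
  simp [pd]

theorem pd_mul (hf : DifferentiableAt ℝ f x) (hg : DifferentiableAt ℝ g x) :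
    pd j (fun y => f y * g y) x = pd j f x * g x + f x * pd j g x := by
  simp only [pd, fderiv_fun_mul hf hg, add_apply, smul_apply, smul_eq_mul]
  ring

theorem pd_sub (hf : DifferentiableAt ℝ f x) (hg : DifferentiableAt ℝ g x) :
    pd j (fun y => f y - g y) x = pd j f x - pd j g x := by
  simp [pd, fderiv_fun_sub hf hg]

theorem pd_sum {ι : Type*} {s : Finset ι} {F : ι → (Fin m → ℝ) → ℝ}
    (h : ∀ i ∈ s, DifferentiableAt ℝ (F i) x) :
    pd j (fun y => ∑ i ∈ s, F i y) x = ∑ i ∈ s, pd j (F i) x := by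
  simp [pd, fderiv_fun_sum h]

theorem pd_eq_zero_of_notMem_tsupport (hx : x ∉ tsupport φ) : pd j φ x = 0 := by
  simp [pd, fderiv_of_notMem_tsupport ℝ hx]

theorem ContDiff.continuous_pd (hφ : ContDiff ℝ 1 φ) : Continuous (pd j φ) :=
  (hφ.continuous_fderiv one_ne_zero).clm_apply continuous_const

theorem ContDiff.contDiff_pd (hφ : ContDiff ℝ 2 φ) : ContDiff ℝ 1 (pd j φ) :=
  (hφ.fderiv_right (m := 1) le_rfl).clm_apply contDiff_const

theorem pd_pd_comm {u : (Fin m → ℝ) → ℝ} (hu : ContDiff ℝ 2 u) (i k : Fin m) :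
    pd i (pd k u) x = pd k (pd i u) x := by
  have hd : Differentiable ℝ (fderiv ℝ u) :=
    (hu.fderiv_right (m := 1) le_rfl).differentiable one_ne_zero
  have hpd : ∀ i l : Fin m,
      pd i (pd l u) x = fderiv ℝ (fderiv ℝ u) x (Pi.single i 1) (Pi.single l 1) := by
    intro i l
    change fderiv ℝ (fun y => fderiv ℝ u y (Pi.single l 1)) x (Pi.single i 1) = _
    rw [fderiv_clm_apply (hd x) (differentiableAt_const _)]
    simp
  rw [hpd, hpd]
  exact hu.contDiffAt.isSymmSndFDerivAt (by simp) _ _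

end PartialDerivative

/-- With `a k j = ∂ₖvⱼ`, `g j = ∂ⱼu` and `H k j = ∂ₖ∂ⱼu`, the left side is `div F`, as computed
by `pd_rellichFlux` below. -/
theorem rellich_algebraic_identity {ι : Type*} [Fintype ι] [DecidableEq ι] (a H : ι → ι → ℝ)
    (g v : ι → ℝ) (hH : ∀ j k, H j k = H k j) (htr : ∑ k, H k k = 0) :
    ∑ k, ((2 * ∑ j, (a k j * g j + v j * H k j)) * g k + (2 * ∑ j, v j * g j) * H k k
      - (a k k * ∑ j, g j * g j + v k * ∑ j, (H k j * g j + g j * H k j)))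
    = ∑ j, ∑ k, (a j k + a k j - if j = k then ∑ l, a l l else 0) * g j * g k := by
  have hswap : ∑ k, ∑ j, (v j * H k j * g k - v k * H k j * g j) = 0 := by
    simp only [sum_sub_distrib]
    rw [sub_eq_zero, sum_comm]
    exact sum_congr rfl fun k _ => sum_congr rfl fun j _ => by rw [hH]
  have htrace : ∑ k, ∑ j, v j * g j * H k k = 0 := by
    simp_rw [← sum_mul, ← mul_sum, htr, mul_zero]
  have hdiag : ∑ j, ∑ k, (if j = k then ∑ l, a l l else 0) * g j * g k
      = ∑ k, ∑ j, a k k * g j * g j := by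
    simp only [ite_mul, zero_mul, sum_ite_eq, mem_univ, if_true, sum_mul]
    rw [sum_comm]
  have hrename : ∑ k, ∑ j, a k j * g k * g j = ∑ k, ∑ j, a k j * g j * g k :=
    sum_congr rfl fun k _ => sum_congr rfl fun j _ => mul_right_comm _ _ _
  calc _ = 2 * ∑ k, ∑ j, a k j * g j * g k - ∑ k, ∑ j, a k k * g j * g j
        + 2 * ∑ k, ∑ j, (v j * H k j * g k - v k * H k j * g j)
        + 2 * ∑ k, ∑ j, v j * g j * H k k := by
        simp only [mul_sum, sum_mul, ← sum_add_distrib, ← sum_sub_distrib]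
        exact sum_congr rfl fun k _ => sum_congr rfl fun j _ => by ring
    _ = 2 * ∑ k, ∑ j, a k j * g j * g k - ∑ k, ∑ j, a k k * g j * g j := by
        rw [hswap, htrace]
        ring
    _ = _ := by
        simp only [add_mul, sub_mul, sum_add_distrib, sum_sub_distrib, hdiag]
        rw [sum_comm (f := fun j k => a k j * g j * g k), hrename]
        ring

section Rellich

variable {m : ℕ} {u : (Fin m → ℝ) → ℝ} {v : (Fin m → ℝ) → Fin m → ℝ}

noncomputable def rellichFlux (u : (Fin m → ℝ) → ℝ) (v : (Fin m → ℝ) → Fin m → ℝ) (k : Fin m)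
    (y : Fin m → ℝ) : ℝ :=
  2 * (∑ j, v y j * pd j u y) * pd k u y - v y k * ∑ j, pd j u y * pd j u y

noncomputable def rellichIntegrand (u : (Fin m → ℝ) → ℝ) (v : (Fin m → ℝ) → Fin m → ℝ)
    (j k : Fin m) (x : Fin m → ℝ) : ℝ :=
  (pd j (fun y => v y k) x + pd k (fun y => v y j) x
      - (if j = k then ∑ l, pd l (fun y => v y l) x else 0))
    * pd j u x * pd k u x

theorem contDiff_rellichFlux (hu : ContDiff ℝ 2 u) (hv : ContDiff ℝ 1 v) (k : Fin m) :
    ContDiff ℝ 1 (rellichFlux u v k) := by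
  have hu' : ∀ j, ContDiff ℝ 1 (pd j u) := fun j => hu.contDiff_pd
  have hv' : ∀ j, ContDiff ℝ 1 (fun y => v y j) := contDiff_pi.mp hv
  unfold rellichFlux
  fun_prop

theorem hasCompactSupport_rellichFlux (hv : HasCompactSupport v) (k : Fin m) :
    HasCompactSupport (rellichFlux u v k) :=
  HasCompactSupport.intro hv fun x hx => by
    simp [rellichFlux, image_eq_zero_of_notMem_tsupport hx]

theorem pd_rellichFlux {x : Fin m → ℝ} (hu : ∀ j, DifferentiableAt ℝ (pd j u) x)
    (hv : ∀ j, DifferentiableAt ℝ (fun y => v y j) x) (k : Fin m) :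
    pd k (rellichFlux u v k) x =
      (2 * ∑ j, (pd k (fun y => v y j) x * pd j u x + v x j * pd k (pd j u) x)) * pd k u x
      + (2 * ∑ j, v x j * pd j u x) * pd k (pd k u) x
      - (pd k (fun y => v y k) x * ∑ j, pd j u x * pd j u x
         + v x k * ∑ j, (pd k (pd j u) x * pd j u x + pd j u x * pd k (pd j u) x)) := by
  unfold rellichFlux
  simp (disch := fun_prop) only [pd_sub, pd_mul, pd_sum, pd_const, zero_mul, zero_add]

theorem sum_pd_rellichFlux {x : Fin m → ℝ} (hu : ContDiff ℝ 2 u) (hv : DifferentiableAt ℝ v x)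
    (hharm : ∑ j, pd j (pd j u) x = 0) :
    ∑ k, pd k (rellichFlux u v k) x = ∑ j, ∑ k, rellichIntegrand u v j k x := by
  have hu' : ∀ j, DifferentiableAt ℝ (pd j u) x :=
    fun j => (hu.contDiff_pd.differentiable one_ne_zero) x
  simp only [pd_rellichFlux hu' (differentiableAt_pi.mp hv)]
  exact rellich_algebraic_identity _ _ _ _ (fun _ _ => pd_pd_comm hu _ _) hharm

theorem rellichIntegrand_eq_zero_of_notMem_tsupport {x : Fin m → ℝ} (hx : x ∉ tsupport v)
    (j k : Fin m) : rellichIntegrand u v j k x = 0 := by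
  have hvx : ∀ i l, pd i (fun y => v y l) x = 0 := fun i l =>
    pd_eq_zero_of_notMem_tsupport fun h =>
      hx (tsupport_comp_subset (g := fun w : Fin m → ℝ => w l) rfl v h)
  simp [rellichIntegrand, hvx]

theorem integrable_rellichIntegrand (hu : ContDiff ℝ 1 u) (hv : ContDiff ℝ 1 v)
    (hvs : HasCompactSupport v) (j k : Fin m) : Integrable (rellichIntegrand u v j k) := by
  have hu' : ∀ i, Continuous (pd i u) := fun i => hu.continuous_pd
  have hv' : ∀ i l, Continuous (pd i (fun y => v y l)) :=
    fun i l => (contDiff_pi.mp hv l).continuous_pd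
  have hcont : Continuous (rellichIntegrand u v j k) := by
    unfold rellichIntegrand
    split_ifs <;> fun_prop
  exact hcont.integrable_of_hasCompactSupport
    (HasCompactSupport.intro hvs fun x hx => rellichIntegrand_eq_zero_of_notMem_tsupport hx j k)

end Rellich

theorem stmt9 (n : ℕ) (Ω : Set (Fin (n + 1) → ℝ))
    (u : (Fin (n + 1) → ℝ) → ℝ) (hu : ContDiff ℝ 2 u)
    (hharm : ∀ x, ∑ j, pd j (pd j u) x = 0)
    (v : (Fin (n + 1) → ℝ) → Fin (n + 1) → ℝ) (hv : ContDiff ℝ 1 v)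
    (hvs : HasCompactSupport v) (hsupp : tsupport v ⊆ Ω) :
    ∑ j, ∑ k, ∫ x in Ω,
      (pd j (fun y => v y k) x + pd k (fun y => v y j) x
          - (if j = k then ∑ l, pd l (fun y => v y l) x else 0))
        * pd j u x * pd k u x = 0 := by
  have hint := integrable_rellichIntegrand (hu.of_le one_le_two) hv hvs
  calc ∑ j, ∑ k, ∫ x in Ω, rellichIntegrand u v j k x
      = ∑ j, ∑ k, ∫ x, rellichIntegrand u v j k x := by
        refine sum_congr rfl fun j _ => sum_congr rfl fun k _ => ?_
        exact setIntegral_eq_integral_of_forall_compl_eq_zero fun x hx =>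
          rellichIntegrand_eq_zero_of_notMem_tsupport (fun h => hx (hsupp h)) j k
    _ = ∫ x, ∑ j, ∑ k, rellichIntegrand u v j k x := by
        rw [integral_finsetSum _ fun j _ => integrable_finsetSum _ fun k _ => hint j k]
        exact sum_congr rfl fun j _ => (integral_finsetSum _ fun k _ => hint j k).symm
    _ = ∫ x, ∑ k, pd k (rellichFlux u v k) x := by
        congr 1 with x
        exact (sum_pd_rellichFlux hu (hv.differentiable one_ne_zero x) (hharm x)).symm
    _ = 0 := by
        have hF := contDiff_rellichFlux hu hv
        have hFs := hasCompactSupport_rellichFlux (u := u) hvs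
        simp only [pd]
        rw [integral_finsetSum _ fun k _ => (hF k).integrable_fderiv_apply (hFs k) _]
        exact sum_eq_zero fun k _ => integral_fderiv_apply_eq_zero (hF k) (hFs k) _
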